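/- arXiv:2105.08231 — 9 statements merged into one kernel-verified Lean document; each statement's English description precedes it below -/
import Mathlib

section
/- Let r be a weakly transitive relation on a set W (i.e., for all w, s, t, if r w s and r s t then w = t or r w t). Then the reflexive closure of r coincides with the reflexive-transitive closure of r: for all w, v, Relation.ReflGen r w v holds if and only if Relation.ReflTransGen r w v holds. -/
namespace Relation

variable {α : Type*} {r : α → α → Prop}

theorem isTrans_reflGen_of_weakly_transitive (hr : ∀ a b c, r a b → r b c → a = c ∨ r a c) :
    IsTrans α (ReflGen r) where
  trans a b c
    | .refl, hbc => hbc
    | hab, .refl => hab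
    | .single hab, .single hbc => (hr a b c hab hbc).elim (· ▸ .refl) .single

theorem reflTransGen_eq_reflGen_of_weakly_transitive
    (hr : ∀ a b c, r a b → r b c → a = c ∨ r a c) : ReflTransGen r = ReflGen r := by
  have := isTrans_reflGen_of_weakly_transitive hr
  rw [← reflTransGen_reflGen, reflTransGen_eq_self]

end Relation

theorem reflGen_iff_reflTransGen_of_weakly_transitive {W : Type*} (r : W → W → Prop)
    (hwt : ∀ w s t : W, r w s → r s t → w = t ∨ r w t) :
    ∀ w v : W, Relation.ReflGen r w v ↔ Relation.ReflTransGen r w v := by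
  intro w v
  rw [Relation.reflTransGen_eq_reflGen_of_weakly_transitive hwt]
end

section
/- Let (X, d) be a derivative space, i.e. d : Set X → Set X satisfies d ∅ = ∅, d (A ∪ B) = d A ∪ d B and d (d A) ⊆ A ∪ d A for all A, B ⊆ X. Then for every A ⊆ X, d A = {y | for every U ⊆ X, if y ∉ d (Uᶜ) then U ∩ A is nonempty}. Equivalently, d A is the set of points all of whose d-neighborhoods meet A. -/
open Set

theorem monotone_of_map_union {X : Type*} {d : Set X → Set X}
    (hunion : ∀ A B : Set X, d (A ∪ B) = d A ∪ d B) : Monotone d := fun A B hAB => by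
  rw [← union_eq_self_of_subset_left hAB, hunion]
  exact subset_union_left

/-- `U = Aᶜ` is a neighborhood of every point outside `d A`, and it misses `A`. -/
theorem Monotone.eq_setOf_forall_neighborhood_inter_nonempty {X : Type*} {d : Set X → Set X}
    (hd : Monotone d) (A : Set X) :
    d A = {y | ∀ U : Set X, y ∉ d Uᶜ → (U ∩ A).Nonempty} := by
  ext y
  refine ⟨fun hy U hU => ?_, fun hy => ?_⟩
  · by_contra hUA
    have hAU : A ⊆ Uᶜ := fun x hxA hxU => hUA ⟨x, hxU, hxA⟩
    exact hU (hd hAU hy)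
  · by_contra hyA
    have hdisj := hy Aᶜ (by rwa [compl_compl])
    rw [compl_inter_self] at hdisj
    exact not_nonempty_empty hdisj

theorem derivative_eq_points_whose_dneighborhoods_meet_general {X : Type*} (d : Set X → Set X)
    (hunion : ∀ A B : Set X, d (A ∪ B) = d A ∪ d B) :
    ∀ A : Set X, d A = {y | ∀ U : Set X, y ∉ d Uᶜ → (U ∩ A).Nonempty} :=
  (monotone_of_map_union hunion).eq_setOf_forall_neighborhood_inter_nonempty

theorem derivative_eq_points_whose_dneighborhoods_meet {X : Type*} (d : Set X → Set X)
    (hempty : d ∅ = ∅)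
    (hunion : ∀ A B : Set X, d (A ∪ B) = d A ∪ d B)
    (hweak : ∀ A : Set X, d (d A) ⊆ A ∪ d A) :
    ∀ A : Set X, d A = {y | ∀ U : Set X, y ∉ d Uᶜ → (U ∩ A).Nonempty} :=
  derivative_eq_points_whose_dneighborhoods_meet_general d hunion
end

section
/- Let (X, d) and (X', d') be derivative spaces and π : X → X' a map. The following are equivalent: (1) π is a d-morphism, i.e. π ⁻¹' (d' B) = d (π ⁻¹' B) for every B ⊆ X'; (2) for every x ∈ X, both the back condition (for every B ⊆ X', if B ∈ N_{d'}(π x) then π ⁻¹' B ∈ N_d(x)) and the forth condition (for every A ⊆ X, if A ∈ N_d(x) then π '' A ∈ N_{d'}(π x)) hold; (3) for every x ∈ X and every B ⊆ X', π ⁻¹' B ∈ N_d(x) if and only if B ∈ N_{d'}(π x). -/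
/-!
Condition (3) for `Bᶜ` says exactly that `π ⁻¹' d' B` and `d (π ⁻¹' B)` have the same points, so
(1) ⇔ (3). Additivity makes `d` monotone, so `d`-neighbourhoods are upward closed. The back condition
is one half of (3); using `π '' (π ⁻¹' B) ⊆ B` and `A ⊆ π ⁻¹' (π '' A)`, the forth condition is
equivalent to the other half.
-/

open Set

def dNhds {X : Type*} (d : Set X → Set X) (x : X) : Set (Set X) := {U | x ∉ d Uᶜ}

def IsDMorphism {X X' : Type*} (d : Set X → Set X) (d' : Set X' → Set X') (π : X → X') : Prop :=
  ∀ B : Set X', π ⁻¹' d' B = d (π ⁻¹' B)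

theorem dNhds_mono {X : Type*} {d : Set X → Set X} (hd : Monotone d) {x : X} {U V : Set X}
    (hU : U ∈ dNhds d x) (hUV : U ⊆ V) : V ∈ dNhds d x :=
  fun hV => hU (hd (compl_subset_compl.2 hUV) hV)

theorem isDMorphism_iff_forall_preimage_mem_dNhds {X X' : Type*} {d : Set X → Set X}
    {d' : Set X' → Set X'} {π : X → X'} :
    IsDMorphism d d' π ↔ ∀ (x : X) (B : Set X'), π ⁻¹' B ∈ dNhds d x ↔ B ∈ dNhds d' (π x) := by
  refine compl_surjective.forall.trans ?_
  simp only [dNhds, mem_ofPred_eq, not_iff_not, ← preimage_compl, Set.ext_iff, mem_preimage]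
  rw [forall_comm]
  simp only [Iff.comm]

theorem back_and_forth_iff_preimage_mem_dNhds {X X' : Type*} {d : Set X → Set X}
    {d' : Set X' → Set X'} (hd : Monotone d) (hd' : Monotone d') (π : X → X') (x : X) :
    ((∀ B : Set X', B ∈ dNhds d' (π x) → π ⁻¹' B ∈ dNhds d x) ∧
      (∀ A : Set X, A ∈ dNhds d x → π '' A ∈ dNhds d' (π x))) ↔
    ∀ B : Set X', π ⁻¹' B ∈ dNhds d x ↔ B ∈ dNhds d' (π x) := by
  constructor
  · rintro ⟨back, forth⟩ B
    exact ⟨fun hB => dNhds_mono hd' (forth _ hB) (image_preimage_subset π B), back B⟩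
  · intro h
    exact ⟨fun B => (h B).2,
      fun A hA => (h _).1 (dNhds_mono hd hA (subset_preimage_image π A))⟩

theorem dmorphism_characterizations_general {X X' : Type*}
    (d : Set X → Set X) (d' : Set X' → Set X')
    (hunion : ∀ A B : Set X, d (A ∪ B) = d A ∪ d B)
    (hunion' : ∀ A B : Set X', d' (A ∪ B) = d' A ∪ d' B)
    (π : X → X') :
    ((∀ B : Set X', π ⁻¹' (d' B) = d (π ⁻¹' B)) ↔
      (∀ x : X,
        (∀ B : Set X', π x ∉ d' Bᶜ → x ∉ d (π ⁻¹' B)ᶜ) ∧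
        (∀ A : Set X, x ∉ d Aᶜ → π x ∉ d' (π '' A)ᶜ))) ∧
    ((∀ B : Set X', π ⁻¹' (d' B) = d (π ⁻¹' B)) ↔
      (∀ (x : X) (B : Set X'), x ∉ d (π ⁻¹' B)ᶜ ↔ π x ∉ d' Bᶜ)) :=
  ⟨isDMorphism_iff_forall_preimage_mem_dNhds.trans <| forall_congr' fun x =>
      (back_and_forth_iff_preimage_mem_dNhds (monotone_of_map_union hunion)
        (monotone_of_map_union hunion') π x).symm,
    isDMorphism_iff_forall_preimage_mem_dNhds⟩

theorem dmorphism_characterizations {X X' : Type*}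
    (d : Set X → Set X) (d' : Set X' → Set X')
    (hempty : d ∅ = ∅) (hunion : ∀ A B : Set X, d (A ∪ B) = d A ∪ d B)
    (hweak : ∀ A : Set X, d (d A) ⊆ A ∪ d A)
    (hempty' : d' ∅ = ∅) (hunion' : ∀ A B : Set X', d' (A ∪ B) = d' A ∪ d' B)
    (hweak' : ∀ A : Set X', d' (d' A) ⊆ A ∪ d' A)
    (π : X → X') :
    ((∀ B : Set X', π ⁻¹' (d' B) = d (π ⁻¹' B)) ↔
      (∀ x : X,
        (∀ B : Set X', π x ∉ d' Bᶜ → x ∉ d (π ⁻¹' B)ᶜ) ∧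
        (∀ A : Set X, x ∉ d Aᶜ → π x ∉ d' (π '' A)ᶜ))) ∧
    ((∀ B : Set X', π ⁻¹' (d' B) = d (π ⁻¹' B)) ↔
      (∀ (x : X) (B : Set X'), x ∉ d (π ⁻¹' B)ᶜ ↔ π x ∉ d' Bᶜ)) :=
  dmorphism_characterizations_general d d' hunion hunion' π
end

section
/- Let X be a topological space, r a weakly transitive relation on a set W, and π : X → W a map. Then π satisfies π ⁻¹' {w | ∃ v, r w v ∧ v ∈ A} = derivedSet (π ⁻¹' A) for every A ⊆ W if and only if for every x ∈ X both of the following hold: (i) there exists an open set U with x ∈ U such that for every y ∈ U with y ≠ x, r (π x) (π y); and (ii) for every open set U with x ∈ U and every v ∈ W with r (π x) v, there exists y ∈ U with y ≠ x and π y = v. -/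
/-!
The equation splits pointwise into two inclusions. At a point `x`, the inclusion of
`π ⁻¹' d_r A` in the derived set for all `A` is the back condition (ii), already for singletons
`A = {v}`; the reverse inclusion is the forth condition (i), already for the single set
`A = {v | ¬ r (π x) v}` of points not seen from `π x`.
-/

section

variable {X W : Type*} [TopologicalSpace X]

theorem mem_derivedSet_iff_forall_isOpen {s : Set X} {x : X} :
    x ∈ derivedSet s ↔ ∀ U : Set X, IsOpen U → x ∈ U → ∃ y ∈ U, y ≠ x ∧ y ∈ s := by
  simp only [mem_derivedSet, accPt_iff_frequently, (nhds_basis_opens x).frequently_iff]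
  exact forall_congr' fun U => by tauto

variable (r : W → W → Prop) (π : X → W) (x : X)

theorem derivedSet_preimage_forth_iff :
    (∀ A : Set W, x ∈ derivedSet (π ⁻¹' A) → ∃ v, r (π x) v ∧ v ∈ A) ↔
      ∃ U : Set X, IsOpen U ∧ x ∈ U ∧ ∀ y ∈ U, y ≠ x → r (π x) (π y) := by
  constructor
  · intro h
    have hx : x ∉ derivedSet (π ⁻¹' {v | ¬ r (π x) v}) := fun hx =>
      let ⟨_, hv, hv'⟩ := h _ hx
      hv' hv
    rw [mem_derivedSet_iff_forall_isOpen] at hx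
    push Not at hx
    simpa using hx
  · rintro ⟨U, hU, hxU, hrU⟩ A hx
    obtain ⟨y, hyU, hyx, hyA⟩ := mem_derivedSet_iff_forall_isOpen.1 hx U hU hxU
    exact ⟨π y, hrU y hyU hyx, hyA⟩

theorem derivedSet_preimage_back_iff :
    (∀ A : Set W, (∃ v, r (π x) v ∧ v ∈ A) → x ∈ derivedSet (π ⁻¹' A)) ↔
      ∀ U : Set X, IsOpen U → x ∈ U → ∀ v : W, r (π x) v → ∃ y ∈ U, y ≠ x ∧ π y = v := by
  constructor
  · intro h U hU hxU v hv
    exact mem_derivedSet_iff_forall_isOpen.1 (h {v} ⟨v, hv, rfl⟩) U hU hxU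
  · rintro h A ⟨v, hv, hvA⟩
    refine mem_derivedSet_iff_forall_isOpen.2 fun U hU hxU => ?_
    obtain ⟨y, hyU, hyx, rfl⟩ := h U hU hxU v hv
    exact ⟨y, hyU, hyx, hvA⟩

end

theorem dmorphism_to_kripke_frame_iff_back_and_forth_general {X W : Type*} [TopologicalSpace X]
    (r : W → W → Prop)
    (π : X → W) :
    (∀ A : Set W, π ⁻¹' {w | ∃ v, r w v ∧ v ∈ A} = derivedSet (π ⁻¹' A)) ↔
    (∀ x : X,
      (∃ U : Set X, IsOpen U ∧ x ∈ U ∧ ∀ y ∈ U, y ≠ x → r (π x) (π y)) ∧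
      (∀ U : Set X, IsOpen U → x ∈ U → ∀ v : W, r (π x) v →
        ∃ y ∈ U, y ≠ x ∧ π y = v)) := by
  have pointwise (x : X) :
      (∀ A : Set W, (∃ v, r (π x) v ∧ v ∈ A) ↔ x ∈ derivedSet (π ⁻¹' A)) ↔
        (∃ U : Set X, IsOpen U ∧ x ∈ U ∧ ∀ y ∈ U, y ≠ x → r (π x) (π y)) ∧
          ∀ U : Set X, IsOpen U → x ∈ U → ∀ v : W, r (π x) v → ∃ y ∈ U, y ≠ x ∧ π y = v := by
    simp only [iff_iff_implies_and_implies (a := ∃ v, _), forall_and]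
    rw [and_comm, derivedSet_preimage_forth_iff, derivedSet_preimage_back_iff]
  simp only [Set.ext_iff]
  rw [forall_comm]
  exact forall_congr' pointwise

theorem dmorphism_to_kripke_frame_iff_back_and_forth {X W : Type*} [TopologicalSpace X]
    (r : W → W → Prop)
    (hwt : ∀ w s t : W, r w s → r s t → w = t ∨ r w t)
    (π : X → W) :
    (∀ A : Set W, π ⁻¹' {w | ∃ v, r w v ∧ v ∈ A} = derivedSet (π ⁻¹' A)) ↔
    (∀ x : X,
      (∃ U : Set X, IsOpen U ∧ x ∈ U ∧ ∀ y ∈ U, y ≠ x → r (π x) (π y)) ∧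
      (∀ U : Set X, IsOpen U → x ∈ U → ∀ v : W, r (π x) v →
        ∃ y ∈ U, y ≠ x ∧ π y = v)) :=
  dmorphism_to_kripke_frame_iff_back_and_forth_general r π
end

section
/- Let r be a weakly transitive relation on a set W. Define the depth dpt(w) ∈ ℕ∞ of a point w as the supremum of the set of n ∈ ℕ for which there exists a strict chain w = w₀, w₁, …, w_n with r w_i w_{i+1} and ¬ r w_{i+1} w_i for all i < n. Then for all w, s ∈ W: (1) if w = s or r w s, then dpt(s) ≤ dpt(w); (2) if r w s and r s w, then dpt(w) = dpt(s); (3) if r w s, dpt(w) = dpt(s), and dpt(w) < ⊤, then r s w; (4) if r w s, ¬ r s w, and dpt(s) < ⊤, then dpt(s) < dpt(w). -/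
/-- The depth of a point `w`: the supremum (in `ℕ∞`) of the lengths `n` of strict chains
`w = w₀ → w₁ → ⋯ → w_n` (where each step satisfies `r wᵢ wᵢ₊₁` and `¬ r wᵢ₊₁ wᵢ`). -/
noncomputable def dpt {W : Type*} (r : W → W → Prop) (w : W) : ℕ∞ :=
  sSup {e : ℕ∞ | ∃ n : ℕ, e = (n : ℕ∞) ∧
    ∃ f : ℕ → W, f 0 = w ∧ ∀ i < n, r (f i) (f (i + 1)) ∧ ¬ r (f (i + 1)) (f i)}

/-!
A strict chain from `s` can be re-rooted at any `w` with `r w s` (weak transitivity keeps the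
first step strict), and prolonged by one step at `w` when moreover `¬ r s w`. The first fact
makes the depth antitone along `r`; the second gives `dpt s + 1 ≤ dpt w`, which is a strict
increase as soon as `dpt s` is finite.
-/

def WeaklyTransitive {W : Type*} (r : W → W → Prop) : Prop :=
  ∀ w s t : W, r w s → r s t → w = t ∨ r w t

def HasStrictChain {W : Type*} (r : W → W → Prop) (w : W) (n : ℕ) : Prop :=
  ∃ f : ℕ → W, f 0 = w ∧ ∀ i < n, r (f i) (f (i + 1)) ∧ ¬ r (f (i + 1)) (f i)

namespace HasStrictChain

variable {W : Type*} {r : W → W → Prop} {w s : W} {n : ℕ}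

theorem zero (r : W → W → Prop) (w : W) : HasStrictChain r w 0 :=
  ⟨fun _ => w, rfl, fun _ h => absurd h (Nat.not_lt_zero _)⟩

theorem of_rel (hwt : WeaklyTransitive r) (hws : r w s) (h : HasStrictChain r s n) :
    HasStrictChain r w n := by
  obtain ⟨f, rfl, hf⟩ := h
  refine ⟨fun | 0 => w | i + 1 => f (i + 1), rfl, ?_⟩
  rintro (_ | i) hi
  · obtain ⟨h01, h10⟩ := hf 0 hi
    refine ⟨(hwt _ _ _ hws h01).resolve_left ?_, fun h1w => ?_⟩
    · rintro rfl
      exact h10 hws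
    · rcases hwt _ _ _ h1w hws with h1 | h1
      · exact h10 (h1 ▸ h01)
      · exact h10 h1
  · exact hf (i + 1) hi

theorem cons (hws : r w s) (hsw : ¬ r s w) (h : HasStrictChain r s n) :
    HasStrictChain r w (n + 1) := by
  obtain ⟨f, rfl, hf⟩ := h
  refine ⟨fun | 0 => w | i + 1 => f i, rfl, ?_⟩
  rintro (_ | i) hi
  · exact ⟨hws, hsw⟩
  · exact hf i (by omega)

end HasStrictChain

section Depth

variable {W : Type*} {r : W → W → Prop} {w s : W}

theorem le_dpt {n : ℕ} (h : HasStrictChain r w n) : (n : ℕ∞) ≤ dpt r w :=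
  le_sSup ⟨n, rfl, h⟩

theorem dpt_le_iff {e : ℕ∞} : dpt r w ≤ e ↔ ∀ n, HasStrictChain r w n → (n : ℕ∞) ≤ e :=
  sSup_le_iff.trans ⟨fun h n hn => h _ ⟨n, rfl, hn⟩, by rintro h _ ⟨n, rfl, hn⟩; exact h n hn⟩

theorem dpt_le_of_rel (hwt : WeaklyTransitive r) (hws : r w s) : dpt r s ≤ dpt r w :=
  dpt_le_iff.2 fun _ hn => le_dpt (hn.of_rel hwt hws)

theorem dpt_add_one_le (hws : r w s) (hsw : ¬ r s w) : dpt r s + 1 ≤ dpt r w := by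
  rw [dpt, ENat.sSup_add]
  · refine iSup₂_le ?_
    rintro _ ⟨n, rfl, hn⟩
    exact_mod_cast le_dpt (HasStrictChain.cons hws hsw hn)
  · exact ⟨0, 0, rfl, HasStrictChain.zero r s⟩

theorem dpt_lt_of_rel_of_not_rel (hws : r w s) (hsw : ¬ r s w) (hs : dpt r s ≠ ⊤) :
    dpt r s < dpt r w :=
  (ENat.add_one_le_iff hs).1 (dpt_add_one_le hws hsw)

end Depth

theorem depth_properties {W : Type*} (r : W → W → Prop)
    (hwt : ∀ w s t : W, r w s → r s t → w = t ∨ r w t) :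
    ∀ w s : W,
      ((w = s ∨ r w s) → dpt r s ≤ dpt r w) ∧
      (r w s → r s w → dpt r w = dpt r s) ∧
      (r w s →  dpt r w = dpt r s → dpt r w < ⊤ → r s w) ∧
      (r w s → ¬ r s w → dpt r s < ⊤ → dpt r s < dpt r w) := by
  intro w s
  refine ⟨?_, fun hws hsw => ?_, fun hws heq hfin => ?_,
    fun hws hsw hfin => dpt_lt_of_rel_of_not_rel hws hsw hfin.ne⟩
  · rintro (rfl | hws)
    · exact le_rfl
    · exact dpt_le_of_rel hwt hws
  · exact (dpt_le_of_rel hwt hsw).antisymm (dpt_le_of_rel hwt hws)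
  · by_contra hsw
    exact (dpt_lt_of_rel_of_not_rel hws hsw (heq ▸ hfin).ne).ne heq.symm
end

section
/- Let r be a weakly transitive relation on a set W. Then there exist a type X, a topology on X, and a surjective map π : X → W such that π is a d-morphism from the Cantor derivative to the relational derivative: for every A ⊆ W, derivedSet (π ⁻¹' A) = π ⁻¹' {w | ∃ v, r w v ∧ v ∈ A}. -/
universe u

/-! The reflexive closure of a weakly transitive relation is transitive, so in the topology of
`r`-upsets the smallest neighbourhood of `w` is `{w} ∪ r[w]`. Pulling this topology back along a
projection `π`, a point `x` is a limit point of `π⁻¹ A` iff some point of `π⁻¹ A` other than `x`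
lies over `{π x} ∪ r[π x]`. Over `v ≠ π x` any point will do; over `π x` itself a second point of
the fibre is needed, so exactly the reflexive points of `W` are doubled. -/

open Filter Topology Relation

theorem mem_derivedSet_iff_of_nhds_eq_principal {X : Type*} [TopologicalSpace X] {x : X}
    {U : Set X} (hU : 𝓝 x = 𝓟 U) (C : Set X) :
    x ∈ derivedSet C ↔ ∃ y ∈ U ∩ C, y ≠ x := by
  rw [mem_derivedSet, accPt_iff_nhds, hU]
  exact ⟨fun h ↦ h U (mem_principal_self U),
    fun ⟨y, ⟨hyU, hyC⟩, hyx⟩ V hV ↦ ⟨y, ⟨mem_principal.1 hV hyU, hyC⟩, hyx⟩⟩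

namespace Relation

variable {W : Type u} {r : W → W → Prop}

def WeaklyTransitive (r : W → W → Prop) : Prop :=
  ∀ w s t, r w s → r s t → w = t ∨ r w t

abbrev upsetTopology (r : W → W → Prop) : TopologicalSpace W where
  IsOpen U := ∀ w ∈ U, ∀ v, r w v → v ∈ U
  isOpen_univ _ _ _ _ := trivial
  isOpen_inter _ _ hU hV w hw v hv := ⟨hU w hw.1 v hv, hV w hw.2 v hv⟩
  isOpen_sUnion _ hS := fun _ ⟨U, hUS, hwU⟩ v hv ↦ ⟨U, hUS, hS U hUS _ hwU v hv⟩

theorem WeaklyTransitive.nhds_upsetTopology (hwt : WeaklyTransitive r) (w : W) :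
    @nhds W (upsetTopology r) w = 𝓟 {v | w = v ∨ r w v} := by
  let _ : TopologicalSpace W := upsetTopology r
  have hopen : IsOpen {v | w = v ∨ r w v} := by
    rintro v (rfl | hwv) u hvu
    exacts [Or.inr hvu, hwt w v u hwv hvu]
  refine le_antisymm (le_principal_iff.2 (hopen.mem_nhds (Or.inl rfl))) fun V hV ↦ ?_
  obtain ⟨O, hOV, hO, hwO⟩ := mem_nhds_iff.1 hV
  rintro v (rfl | hwv)
  exacts [hOV hwO, hOV (hO w hwO _ hwv)]

def ReflexiveDoubling (r : W → W → Prop) : Type u :=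
  {p : W × Bool // p.2 = true → r p.1 p.1}

namespace ReflexiveDoubling

def proj (x : ReflexiveDoubling r) : W := x.1.1

instance : TopologicalSpace (ReflexiveDoubling r) :=
  .induced proj (upsetTopology r)

theorem proj_surjective : Function.Surjective (proj (r := r)) :=
  fun w ↦ ⟨⟨(w, false), nofun⟩, rfl⟩

theorem exists_ne_proj_eq_iff (x : ReflexiveDoubling r) (v : W) :
    (∃ y : ReflexiveDoubling r, y.proj = v ∧ y ≠ x) ↔ x.proj ≠ v ∨ r v v := by
  constructor
  · rintro ⟨⟨⟨v, b⟩, hb⟩, rfl, hyx⟩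
    refine or_iff_not_imp_left.2 fun hxv ↦ ?_
    obtain ⟨⟨w, c⟩, hc⟩ := x
    obtain rfl : w = v := not_not.1 hxv
    cases b with
    | true => exact hb rfl
    | false => cases c with
      | true => exact hc rfl
      | false => exact absurd rfl hyx
  · intro h
    by_cases hxv : x.proj = v
    · refine ⟨⟨(v, !x.1.2), fun _ ↦ h.resolve_left (not_not.2 hxv)⟩, rfl, fun hyx ↦ ?_⟩
      simpa using congrArg (·.1.2) hyx
    · exact ⟨⟨(v, false), nofun⟩, rfl, fun hyx ↦ hxv (congrArg proj hyx).symm⟩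

theorem nhds_eq (hwt : WeaklyTransitive r) (x : ReflexiveDoubling r) :
    𝓝 x = 𝓟 (proj ⁻¹' {v | x.proj = v ∨ r x.proj v}) := by
  rw [@nhds_induced W _ (upsetTopology r), hwt.nhds_upsetTopology, comap_principal]

theorem mem_derivedSet_preimage_proj_iff (hwt : WeaklyTransitive r) (A : Set W)
    (x : ReflexiveDoubling r) :
    x ∈ derivedSet (proj ⁻¹' A) ↔ ∃ v, r x.proj v ∧ v ∈ A := by
  rw [mem_derivedSet_iff_of_nhds_eq_principal (nhds_eq hwt x)]
  constructor
  · rintro ⟨y, ⟨hxy, hyA⟩, hyx⟩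
    rcases (exists_ne_proj_eq_iff x y.proj).1 ⟨y, rfl, hyx⟩ with hne | hrefl
    · exact ⟨y.proj, hxy.resolve_left hne, hyA⟩
    · exact ⟨y.proj, hxy.elim (· ▸ hrefl) id, hyA⟩
  · rintro ⟨v, hxv, hvA⟩
    obtain ⟨y, rfl, hyx⟩ :=
      (exists_ne_proj_eq_iff x v).2 (or_iff_not_imp_left.2 fun h ↦ not_not.1 h ▸ hxv)
    exact ⟨y, ⟨Or.inr hxv, hvA⟩, hyx⟩

end ReflexiveDoubling

end Relation

theorem exists_topological_dmorphism_onto_wK4_frame {W : Type u} (r : W → W → Prop)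
    (hwt : ∀ w s t : W, r w s → r s t → w = t ∨ r w t) :
    ∃ (X : Type u) (t : TopologicalSpace X) (π : X → W),
      Function.Surjective π ∧
      ∀ A : Set W,
        @derivedSet X t (π ⁻¹' A) = π ⁻¹' {w | ∃ v, r w v ∧ v ∈ A} := by
  exact ⟨ReflexiveDoubling r, inferInstance, ReflexiveDoubling.proj,
    ReflexiveDoubling.proj_surjective,
    fun A ↦ Set.ext (ReflexiveDoubling.mem_derivedSet_preimage_proj_iff hwt A)⟩
end

section
/- Let r be a transitive relation on a set W. Then there exist a type X, a topology on X that is T_D (i.e., for every x ∈ X there exists an open set U with U ∩ closure {x} = {x}), and a surjective map π : X → W such that for every A ⊆ W, derivedSet (π ⁻¹' A) = π ⁻¹' {w | ∃ v, r w v ∧ v ∈ A}. -/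
/-!
Replace each world `w` by copies `(w, n)`, one on every level `n : ℕ`, and let the basic
neighbourhoods of `(w, n)` be the point itself together with all copies of the `r`-successors of
`w` from some level on; transitivity of `r` makes these sets open. A punctured neighbourhood of
`(w, n)` then contains only copies of successors of `w`, and it meets the copies of every successor,
so the derived set of the copies of `A` consists of the copies of the worlds that see `A`. The
levels also separate points: the basic neighbourhood of `p` above the level of `x ≠ p` misses `x`,
so the space is even T₁.
-/

universe u

open Set Filter Topology

structure LevelSpace {W : Type u} (r : W → W → Prop) where
  world : W
  level : ℕ

namespace LevelSpace

variable {W : Type u} {r : W → W → Prop}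

def basicNbhd (p : LevelSpace r) (m : ℕ) : Set (LevelSpace r) :=
  insert p {q | r p.world q.world ∧ m ≤ q.level}

instance : TopologicalSpace (LevelSpace r) where
  IsOpen S := ∀ p ∈ S, ∃ m, basicNbhd p m ⊆ S
  isOpen_univ _ _ := ⟨0, subset_univ _⟩
  isOpen_inter S T hS hT p hp := by
    obtain ⟨m, hm⟩ := hS p hp.1
    obtain ⟨n, hn⟩ := hT p hp.2
    refine ⟨max m n, fun q hq => ?_⟩
    rcases hq with rfl | ⟨hpq, hq⟩
    · exact hp
    · exact ⟨hm (Or.inr ⟨hpq, le_of_max_le_left hq⟩), hn (Or.inr ⟨hpq, le_of_max_le_right hq⟩)⟩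
  isOpen_sUnion 𝒮 h p := by
    rintro ⟨S, hS, hpS⟩
    obtain ⟨m, hm⟩ := h S hS p hpS
    exact ⟨m, hm.trans (subset_sUnion_of_mem hS)⟩

theorem isOpen_iff {S : Set (LevelSpace r)} : IsOpen S ↔ ∀ p ∈ S, ∃ m, basicNbhd p m ⊆ S :=
  Iff.rfl

instance : T1Space (LevelSpace r) where
  t1 x := isOpen_compl_iff.mp <| isOpen_iff.mpr fun p hpx => ⟨x.level + 1, by
    rintro q (rfl | ⟨-, hq⟩)
    · exact hpx
    · rintro rfl
      omega⟩

theorem isOpen_basicNbhd [IsTrans W r] (p : LevelSpace r) (m : ℕ) : IsOpen (basicNbhd p m) := by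
  rintro q (rfl | ⟨hpq, hq⟩)
  · exact ⟨m, subset_rfl⟩
  · refine ⟨m, ?_⟩
    rintro s (rfl | ⟨hqs, hs⟩)
    · exact Or.inr ⟨hpq, hq⟩
    · exact Or.inr ⟨_root_.trans hpq hqs, hs⟩

theorem hasBasis_nhds [IsTrans W r] (p : LevelSpace r) :
    (𝓝 p).HasBasis (fun _ => True) (basicNbhd p) := by
  refine ⟨fun U => ?_⟩
  simp only [mem_nhds_iff, true_and]
  constructor
  · rintro ⟨V, hVU, hV, hpV⟩
    obtain ⟨m, hm⟩ := hV p hpV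
    exact ⟨m, hm.trans hVU⟩
  · rintro ⟨m, hm⟩
    exact ⟨_, hm, isOpen_basicNbhd p m, mem_insert p _⟩

theorem derivedSet_preimage_world [IsTrans W r] (A : Set W) :
    derivedSet (world ⁻¹' A : Set (LevelSpace r)) = world ⁻¹' {w | ∃ v, r w v ∧ v ∈ A} := by
  ext x
  simp only [mem_derivedSet, accPt_iff_frequently, (hasBasis_nhds x).frequently_iff,
    forall_const, mem_preimage, mem_ofPred_eq]
  constructor
  · intro h
    obtain ⟨q, rfl | ⟨hxq, -⟩, hqx, hqA⟩ := h (x.level + 1)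
    · exact absurd rfl hqx
    · exact ⟨q.world, hxq, hqA⟩
  · rintro ⟨v, hxv, hvA⟩ m
    refine ⟨⟨v, max m (x.level + 1)⟩, Or.inr ⟨hxv, le_max_left _ _⟩, fun h => ?_, hvA⟩
    have := congrArg level h
    simp only at this
    omega

end LevelSpace

theorem exists_TD_dmorphism_onto_K4_frame {W : Type u} (r : W → W → Prop)
    (htrans : ∀ w s t : W, r w s → r s t → r w t) :
    ∃ (X : Type u) (t : TopologicalSpace X) (π : X → W),
      (∀ x : X, ∃ U : Set X, @IsOpen X t U ∧ U ∩ @closure X t {x} = {x}) ∧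
      Function.Surjective π ∧
      ∀ A : Set W,
        @derivedSet X t (π ⁻¹' A) = π ⁻¹' {w | ∃ v, r w v ∧ v ∈ A} := by
  have : IsTrans W r := ⟨htrans⟩
  have isolated_in_closure (x : LevelSpace r) : univ ∩ closure {x} = {x} := by
    rw [closure_singleton, univ_inter]
  exact ⟨LevelSpace r, inferInstance, LevelSpace.world,
    fun x => ⟨univ, isOpen_univ, isolated_in_closure x⟩, fun w => ⟨⟨w, 0⟩, rfl⟩,
    LevelSpace.derivedSet_preimage_world⟩
end

section
/- Consider the spine frame: let W = ℕ ⊕ Fin 3, where Sum.inl n represents the finite ordinal n and Sum.inr k represents ω + k (k = 0, 1, 2); order W by: inl n < inl m iff n < m; inl n < inr k for all n, k; inr j < inr k iff j < k as elements of Fin 3. Call a point reflexive if it equals inl n with n odd or equals inr 1. Define a → b to hold iff b < a, or (a = b and a is reflexive), or (a = inr 1 and b = inr 2). Then → is weakly transitive and satisfies the wK4T₀ condition: for all a, b, if a → b and b → a then a → a or b → b. -/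
/-- The underlying order of the spine frame on `ℕ ⊕ Fin 3`:
`inl n` represents the finite ordinal `n`, and `inr k` represents `ω + k`. -/
def spineLt : (ℕ ⊕ Fin 3) → (ℕ ⊕ Fin 3) → Prop
  | Sum.inl n, Sum.inl m => n < m
  | Sum.inl _, Sum.inr _ => True
  | Sum.inr _, Sum.inl _ => False
  | Sum.inr j, Sum.inr k => j < k

/-- A point of the spine frame is reflexive iff it is an odd finite ordinal or `ω + 1`. -/
def spineRefl : (ℕ ⊕ Fin 3) → Prop
  | Sum.inl n => Odd n
  | Sum.inr k => k = 1

/-- The accessibility relation of the spine frame. -/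
def spineR (a b : ℕ ⊕ Fin 3) : Prop :=
  spineLt b a ∨ (a = b ∧ spineRefl a) ∨ (a = Sum.inr 1 ∧ b = Sum.inr 2)

/-
Away from the single extra edge `ω + 1 → ω + 2`, the relation is the converse of the
lexicographic order on `ℕ ⊕ Fin 3` together with loops at the reflexive points, and a
strict order with loops added is weakly transitive. The extra edge joins `ω + 1` to its
immediate successor `ω + 2`, so every two-step path through it either returns to its start
or is shortcut by a strict descent; and a two-cycle between distinct points must use this
edge, hence pass through the reflexive point `ω + 1`.
-/

open Sum

theorem spineLt_iff_toLex_lt {a b : ℕ ⊕ Fin 3} : spineLt a b ↔ toLex a < toLex b := by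
  rcases a with n | j <;> rcases b with m | k <;> simp [spineLt]

theorem spineLt_trans {a b c : ℕ ⊕ Fin 3} (hab : spineLt a b) (hbc : spineLt b c) :
    spineLt a c :=
  spineLt_iff_toLex_lt.2 <| (spineLt_iff_toLex_lt.1 hab).trans (spineLt_iff_toLex_lt.1 hbc)

theorem spineLt_asymm {a b : ℕ ⊕ Fin 3} (hab : spineLt a b) : ¬ spineLt b a := fun hba =>
  (spineLt_iff_toLex_lt.1 hab).not_gt (spineLt_iff_toLex_lt.1 hba)

theorem eq_inr_two_of_spineLt_inr_one {a : ℕ ⊕ Fin 3} (h : spineLt (inr 1) a) : a = inr 2 := by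
  rcases a with n | k
  · exact h.elim
  · fin_cases k <;> simp_all [spineLt]

theorem eq_inr_one_or_spineLt_inr_one_of_spineLt_inr_two {a : ℕ ⊕ Fin 3}
    (h : spineLt a (inr 2)) : a = inr 1 ∨ spineLt a (inr 1) := by
  rcases a with n | k
  · exact Or.inr trivial
  · fin_cases k <;> simp_all [spineLt]

theorem spineR_weakly_transitive :
    ∀ w s t : ℕ ⊕ Fin 3, spineR w s → spineR s t → w = t ∨ spineR w t := by
  rintro w s t (hsw | ⟨rfl, -⟩ | ⟨rfl, rfl⟩) hst
  · rcases hst with hts | ⟨rfl, -⟩ | ⟨rfl, rfl⟩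
    · exact Or.inr (Or.inl (spineLt_trans hts hsw))
    · exact Or.inr (Or.inl hsw)
    · exact Or.inl (eq_inr_two_of_spineLt_inr_one hsw)
  · exact Or.inr hst
  · rcases hst with hts | ⟨-, hrefl⟩ | ⟨hne, -⟩
    · exact (eq_inr_one_or_spineLt_inr_one_of_spineLt_inr_two hts).imp Eq.symm Or.inl
    · exact absurd hrefl (by simp [spineRefl])
    · exact absurd hne (by simp)

theorem eq_inr_one_of_spineR_of_spineR {a b : ℕ ⊕ Fin 3} (hab : spineR a b) (hba : spineR b a)
    (hne : a ≠ b) : a = inr 1 ∨ b = inr 1 := by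
  rcases hab with hba' | ⟨rfl, -⟩ | ⟨rfl, -⟩
  · rcases hba with hab' | ⟨rfl, -⟩ | ⟨rfl, -⟩
    · exact absurd hab' (spineLt_asymm hba')
    · exact absurd rfl hne
    · exact Or.inr rfl
  · exact absurd rfl hne
  · exact Or.inl rfl

theorem spineR_wK4T0 :
    ∀ a b : ℕ ⊕ Fin 3, spineR a b → spineR b a → spineR a a ∨ spineR b b := by
  intro a b hab hba
  by_cases heq : a = b
  · exact Or.inl (heq ▸ hab)
  · have hloop : spineR (inr 1) (inr 1) := Or.inr (Or.inl ⟨rfl, rfl⟩)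
    rcases eq_inr_one_of_spineR_of_spineR hab hba heq with rfl | rfl
    · exact Or.inl hloop
    · exact Or.inr hloop

theorem spineR_weakly_transitive_and_wK4T0 :
    (∀ w s t : ℕ ⊕ Fin 3, spineR w s → spineR s t → w = t ∨ spineR w t) ∧
    (∀ a b : ℕ ⊕ Fin 3, spineR a b → spineR b a → spineR a a ∨ spineR b b) :=
  ⟨spineR_weakly_transitive, spineR_wK4T0⟩
end

section
/- Consider the spine frame: let W = ℕ ⊕ Fin 3, where Sum.inl n represents the finite ordinal n and Sum.inr k represents ω + k (k = 0, 1, 2); order W by: inl n < inl m iff n < m; inl n < inr k for all n, k; inr j < inr k iff j < k as elements of Fin 3. Call a point reflexive if it equals inl n with n odd or equals inr 1, and define a → b to hold iff b < a, or (a = b and a is reflexive), or (a = inr 1 and b = inr 2). Let P = {inl n | n odd} ∪ {inr 1}, and let a →* b mean a = b or a → b. Define F : Set W → Set W by F(Y) = {a | (∃ b, a →* b ∧ b ∈ Y ∧ b ∈ P) ∧ (∃ b, a →* b ∧ b ∈ Y ∧ b ∉ P)}. Then the greatest fixed point of F, i.e. the union ⋃₀ {Y | Y ⊆ F Y} of all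 postfixed points of F, equals {Sum.inr 1, Sum.inr 2}. -/
/-- The reflexive closure of the spine accessibility relation. -/
def spineRStar (a b : ℕ ⊕ Fin 3) : Prop := a = b ∨ spineR a b

/-- The valuation of the propositional variable `p` in the spine model. -/
def spineP : Set (ℕ ⊕ Fin 3) :=
  {a | (∃ n, a = Sum.inl n ∧ Odd n) ∨ a = Sum.inr 1}

/-- The one-step operator of the tangled closure `⟨*⟩∞ {p, ¬p}`. -/
def spineF (Y : Set (ℕ ⊕ Fin 3)) : Set (ℕ ⊕ Fin 3) :=
  {a | (∃ b, spineRStar a b ∧ b ∈ Y ∧ b ∈ spineP) ∧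
       (∃ b, spineRStar a b ∧ b ∈ Y ∧ b ∉ spineP)}
/-!
A finite ordinal `n` only sees finite ordinals `m ≤ n`, and it cannot serve as both the
`p`-witness and the `¬p`-witness for itself; so any point `n` of a postfixed point `Y` forces a
smaller finite ordinal into `Y`, and well-foundedness of `ℕ` rules out finite ordinals altogether.
Then `ω` has no `p`-point in view, while `{ω + 1, ω + 2}` is a postfixed point: `ω + 1` is a
reflexive `p`-point seeing the `¬p`-point `ω + 2`, which sees `ω + 1` back.
-/

@[simp]
lemma inl_mem_spineP_iff {n : ℕ} : Sum.inl n ∈ spineP ↔ Odd n := by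
  simp [spineP]

@[simp]
lemma inr_mem_spineP_iff {k : Fin 3} : Sum.inr k ∈ spineP ↔ k = 1 := by
  simp [spineP]

lemma exists_le_of_spineRStar_inl {n : ℕ} {x : ℕ ⊕ Fin 3} (h : spineRStar (Sum.inl n) x) :
    ∃ m ≤ n, x = Sum.inl m := by
  rcases h with rfl | hlt | ⟨rfl, -⟩ | ⟨h, -⟩
  · exact ⟨n, le_rfl, rfl⟩
  · cases x with
    | inl m => exact ⟨m, hlt.le, rfl⟩
    | inr k => exact hlt.elim
  · exact ⟨n, le_rfl, rfl⟩
  · cases h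

lemma spineRStar_inr_zero {x : ℕ ⊕ Fin 3} (h : spineRStar (Sum.inr 0) x) :
    x = Sum.inr 0 ∨ ∃ m, x = Sum.inl m := by
  rcases h with rfl | hlt | ⟨rfl, -⟩ | ⟨h, -⟩
  · exact Or.inl rfl
  · cases x with
    | inl m => exact Or.inr ⟨m, rfl⟩
    | inr k => exact (Fin.not_lt_zero k hlt).elim
  · exact Or.inl rfl
  · cases h

section Postfixed

variable {Y : Set (ℕ ⊕ Fin 3)}

lemma inl_notMem_of_subset_spineF (hY : Y ⊆ spineF Y) (n : ℕ) : Sum.inl n ∉ Y := by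
  induction n using Nat.strong_induction_on with
  | _ n ih =>
    intro hn
    obtain ⟨⟨b, hb, hbY, hbP⟩, ⟨c, hc, hcY, hcP⟩⟩ := hY hn
    obtain ⟨i, hin, rfl⟩ := exists_le_of_spineRStar_inl hb
    obtain ⟨j, hjn, rfl⟩ := exists_le_of_spineRStar_inl hc
    rw [inl_mem_spineP_iff] at hbP hcP
    obtain hi | rfl := hin.lt_or_eq
    · exact ih i hi hbY
    obtain hj | rfl := hjn.lt_or_eq
    · exact ih j hj hcY
    exact hcP hbP

lemma inr_zero_notMem_of_subset_spineF (hY : Y ⊆ spineF Y) : Sum.inr 0 ∉ Y := by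
  intro h0
  obtain ⟨⟨b, hb, hbY, hbP⟩, -⟩ := hY h0
  obtain rfl | ⟨m, rfl⟩ := spineRStar_inr_zero hb
  · simp at hbP
  · exact inl_notMem_of_subset_spineF hY m hbY

lemma subset_inr_one_two_of_subset_spineF (hY : Y ⊆ spineF Y) :
    Y ⊆ {Sum.inr 1, Sum.inr 2} := by
  rintro (n | k) ha
  · exact (inl_notMem_of_subset_spineF hY n ha).elim
  · fin_cases k
    · exact (inr_zero_notMem_of_subset_spineF hY ha).elim
    · exact Or.inl rfl
    · exact Or.inr rfl

end Postfixed

lemma inr_one_two_subset_spineF :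
    ({Sum.inr 1, Sum.inr 2} : Set (ℕ ⊕ Fin 3)) ⊆ spineF {Sum.inr 1, Sum.inr 2} := by
  have one_to_two : spineRStar (Sum.inr 1) (Sum.inr 2) := Or.inr (Or.inr (Or.inr ⟨rfl, rfl⟩))
  have two_to_one : spineRStar (Sum.inr 2) (Sum.inr 1) := Or.inr (Or.inl (show (1 : Fin 3) < 2 by decide))
  rintro x (rfl | rfl)
  · exact ⟨⟨_, Or.inl rfl, Or.inl rfl, by simp⟩, ⟨_, one_to_two, Or.inr rfl, by simp⟩⟩
  · exact ⟨⟨_, two_to_one, Or.inl rfl, by simp⟩, ⟨_, Or.inl rfl, Or.inr rfl, by simp⟩⟩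

theorem gfp_tangled_closure_eq_top_cluster :
    ⋃₀ {Y : Set (ℕ ⊕ Fin 3) | Y ⊆ spineF Y} = {Sum.inr 1, Sum.inr 2} :=
  (Set.sUnion_subset fun _ hY => subset_inr_one_two_of_subset_spineF hY).antisymm
    (Set.subset_sUnion_of_mem inr_one_two_subset_spineF)
end
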